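/- arXiv:2109.00390 — 7 statements merged into one kernel-verified Lean document; each statement's English description precedes it below -/
import Mathlib

section
/- Let S be a finite set and θ a permutation of S, acting on the free abelian group ℤ^S by permuting coordinates. The image of the endomorphism (θ - id) of ℤ^S equals the subgroup of all a : S → ℤ such that the sum of a over every orbit of θ is zero. -/
open Finset

/-- The endomorphism `θ - id` of `ℤ^S`, sending `a` to `θ·a - a`,
where `(θ·a) s = a (θ⁻¹ s)`. -/
def thetaMinusId {S : Type*} (θ : Equiv.Perm S) : (S → ℤ) →+ (S → ℤ) where
  toFun a := (fun s => a (θ⁻¹ s)) - a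
  map_zero' := by funext s; simp
  map_add' a b := by funext s; simp [Pi.sub_apply]; ring

private lemma orbit_sum {S : Type*} [Fintype S] [DecidableEq S] (θ : Equiv.Perm S)
    (a : S → ℤ) (s : S) (n : ℕ) (hn : 0 < n)
    (hfix : ((θ⁻¹ : Equiv.Perm S) ^ n) s = s)
    (hmin : ∀ m, 0 < m → m < n → ((θ⁻¹ : Equiv.Perm S) ^ m) s ≠ s) :
    ∑ j ∈ Finset.range n, a (((θ⁻¹ : Equiv.Perm S) ^ j) s)
      = ∑ t ∈ Finset.univ.filter (fun t => θ.SameCycle s t), a t := by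
  have hq : ∀ q : ℕ, (((θ⁻¹ : Equiv.Perm S) ^ n) ^ q) s = s := by
    intro q
    induction q with
    | zero => simp
    | succ q ih => rw [pow_succ, Equiv.Perm.mul_apply, hfix]; exact ih
  refine Finset.sum_bij (fun j _ => ((θ⁻¹ : Equiv.Perm S) ^ j) s) ?_ ?_ ?_ ?_
  · intro j hj
    simp only [Finset.mem_filter, Finset.mem_univ, true_and]
    exact Equiv.Perm.SameCycle.of_inv ⟨(j : ℤ), by rw [zpow_natCast]⟩
  · intro i hi j hj h
    by_contra hne
    wlog hij : i < j generalizing i j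
    · exact this j hj i hi h.symm (Ne.symm hne) (by omega)
    have h2 : ((θ⁻¹ : Equiv.Perm S) ^ i) (((θ⁻¹ : Equiv.Perm S) ^ (j - i)) s)
        = ((θ⁻¹ : Equiv.Perm S) ^ i) s := by
      rw [← Equiv.Perm.mul_apply, ← pow_add, Nat.add_sub_cancel' hij.le]
      exact h.symm
    have h3 := (Equiv.injective _) h2
    exact hmin (j - i) (by omega) (by simp at hj; omega) h3
  · intro t ht
    simp only [Finset.mem_filter, Finset.mem_univ, true_and] at ht
    obtain ⟨i, -, hit⟩ := (Equiv.Perm.SameCycle.inv ht).exists_pow_eq'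
    refine ⟨i % n, Finset.mem_range.mpr (Nat.mod_lt _ hn), ?_⟩
    rw [← hit]
    conv_rhs => rw [← Nat.mod_add_div i n]
    rw [pow_add, pow_mul, Equiv.Perm.mul_apply, hq]
  · intro j hj
    rfl

/-- The image of `θ - id : ℤ^S → ℤ^S` is exactly the set of
`a : S → ℤ` whose sum over every orbit of `θ` is zero. -/
theorem stmt1 {S : Type*} [Fintype S] [DecidableEq S] (θ : Equiv.Perm S) :
    Set.range (thetaMinusId θ) =
      {a : S → ℤ | ∀ s : S, ∑ t ∈ Finset.univ.filter (fun t => θ.SameCycle s t), a t = 0} := by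
  classical
  ext a
  simp only [Set.mem_range, Set.mem_setOf_eq]
  constructor
  · rintro ⟨b, rfl⟩ s
    have : ∀ t : S, thetaMinusId θ b t = b (θ⁻¹ t) - b t := fun t => rfl
    simp only [this]
    rw [Finset.sum_sub_distrib, sub_eq_zero]
    refine Finset.sum_nbij' (fun t => θ⁻¹ t) (fun t => θ t) ?_ ?_ ?_ ?_ ?_
    · intro t ht
      simp only [Finset.mem_filter, Finset.mem_univ, true_and] at ht ⊢
      exact Equiv.Perm.SameCycle.symm_apply_right ht
    · intro t ht
      simp only [Finset.mem_filter, Finset.mem_univ, true_and] at ht ⊢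
      exact ht.apply_right
    · intro t _; simp
    · intro t _; simp
    · intro t _; rfl
  · intro ha
    set sc : Setoid S := ⟨θ.SameCycle,
      ⟨fun x => Equiv.Perm.SameCycle.refl θ x, Equiv.Perm.SameCycle.symm,
        Equiv.Perm.SameCycle.trans⟩⟩ with hsc
    set rep : S → S := fun t => (Quotient.mk sc t).out with hrepdef
    have hrep : ∀ t : S, θ.SameCycle (rep t) t := by
      intro t
      exact Quotient.exact (Quotient.out_eq (Quotient.mk sc t))
    have hrep_inv : ∀ t : S, rep (θ⁻¹ t) = rep t := by
      intro t
      have : Quotient.mk sc (θ⁻¹ t) = Quotient.mk sc t :=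
        Quotient.sound (Equiv.Perm.sameCycle_symm_apply_left.mpr (Equiv.Perm.SameCycle.refl θ t))
      simp only [hrepdef, this]
    have hex : ∀ t : S, ∃ k : ℕ, (θ ^ k) t = rep t := by
      intro t
      obtain ⟨i, -, hi⟩ := (hrep t).symm.exists_pow_eq'
      exact ⟨i, hi⟩
    refine ⟨fun t => ∑ j ∈ Finset.range (Nat.find (hex t)),
      a (((θ⁻¹ : Equiv.Perm S) ^ j) (rep t)), funext fun t => ?_⟩
    show (∑ j ∈ Finset.range (Nat.find (hex (θ⁻¹ t))),
        a (((θ⁻¹ : Equiv.Perm S) ^ j) (rep (θ⁻¹ t))))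
      - (∑ j ∈ Finset.range (Nat.find (hex t)),
        a (((θ⁻¹ : Equiv.Perm S) ^ j) (rep t))) = a t
    have hk : (θ ^ Nat.find (hex t)) t = rep t := Nat.find_spec (hex t)
    have htk : ((θ⁻¹ : Equiv.Perm S) ^ Nat.find (hex t)) (rep t) = t := by
      rw [inv_pow, Equiv.Perm.inv_eq_iff_eq]
      exact hk.symm
    by_cases hcase : θ⁻¹ t = rep t
    · -- wrap-around case
      have hm0 : Nat.find (hex (θ⁻¹ t)) = 0 := by
        rw [Nat.find_eq_zero]
        show (θ ^ 0) (θ⁻¹ t) = rep (θ⁻¹ t)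
        rw [pow_zero, hrep_inv]
        exact hcase
      have ht : t = θ (rep t) := by rw [← hcase, (by intro e x; exact Equiv.apply_symm_apply e x : ∀ (e : Equiv.Perm S) x, e (e⁻¹ x) = x)]
      have hfixn : (θ ^ (Nat.find (hex t) + 1)) (rep t) = rep t := by
        rw [pow_succ, Equiv.Perm.mul_apply, ← ht, hk]
      have hfix' : ((θ⁻¹ : Equiv.Perm S) ^ (Nat.find (hex t) + 1)) (rep t) = rep t := by
        rw [inv_pow, Equiv.Perm.inv_eq_iff_eq]
        exact hfixn.symm
      have hmin : ∀ m, 0 < m → m < Nat.find (hex t) + 1 →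
          ((θ⁻¹ : Equiv.Perm S) ^ m) (rep t) ≠ rep t := by
        intro m hm1 hm2 hfm
        have hfm' : (θ ^ m) (rep t) = rep t := by
          nth_rewrite 1 [← hfm]
          rw [inv_pow, (by intro e x; exact Equiv.apply_symm_apply e x : ∀ (e : Equiv.Perm S) x, e (e⁻¹ x) = x)]
        have : (θ ^ (m - 1)) t = rep t := by
          conv_lhs => rw [ht, ← Equiv.Perm.mul_apply, ← pow_succ, Nat.sub_add_cancel hm1]
          exact hfm'

        exact Nat.find_min (hex t) (by omega) this
      have horb := orbit_sum θ a (rep t) (Nat.find (hex t) + 1)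
        (Nat.succ_pos _) hfix' hmin
      rw [ha (rep t)] at horb
      rw [hm0]
      simp only [Finset.range_zero, Finset.sum_empty, zero_sub, neg_eq_iff_add_eq_zero]
      calc (∑ j ∈ Finset.range (Nat.find (hex t)),
              a (((θ⁻¹ : Equiv.Perm S) ^ j) (rep t))) + a t
          = ∑ j ∈ Finset.range (Nat.find (hex t) + 1),
              a (((θ⁻¹ : Equiv.Perm S) ^ j) (rep t)) := by
            rw [Finset.sum_range_succ, htk]
        _ = 0 := horb
    · -- generic case
      have hm : Nat.find (hex (θ⁻¹ t)) = Nat.find (hex t) + 1 := by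
        have hub : (θ ^ (Nat.find (hex t) + 1)) (θ⁻¹ t) = rep (θ⁻¹ t) := by
          rw [hrep_inv, pow_succ, Equiv.Perm.mul_apply, (by intro e x; exact Equiv.apply_symm_apply e x : ∀ (e : Equiv.Perm S) x, e (e⁻¹ x) = x), hk]
        have hle : Nat.find (hex (θ⁻¹ t)) ≤ Nat.find (hex t) + 1 := Nat.find_le hub
        have hne0 : Nat.find (hex (θ⁻¹ t)) ≠ 0 := by
          intro h0
          have := Nat.find_spec (hex (θ⁻¹ t))
          rw [h0, pow_zero, hrep_inv] at this
          exact hcase this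
        have hspec : (θ ^ Nat.find (hex (θ⁻¹ t))) (θ⁻¹ t) = rep t := by
          rw [← hrep_inv t]; exact Nat.find_spec (hex (θ⁻¹ t))
        have hge : ¬ Nat.find (hex (θ⁻¹ t)) - 1 < Nat.find (hex t) := by
          intro hlt
          refine Nat.find_min (hex t) hlt ?_
          have h2 : (θ ^ (Nat.find (hex (θ⁻¹ t)) - 1 + 1)) (θ⁻¹ t) = rep t := by
            rw [Nat.sub_add_cancel (Nat.pos_of_ne_zero hne0)]; exact hspec
          rw [pow_succ, Equiv.Perm.mul_apply, (by intro e x; exact Equiv.apply_symm_apply e x : ∀ (e : Equiv.Perm S) x, e (e⁻¹ x) = x)] at h2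
          exact h2
        omega
      rw [hm, Finset.sum_range_succ, hrep_inv, htk]
      ring
end

section
/- Let S be a finite set and let G = ℤ^S ⋊ Equiv.Perm S be the semidirect product where Equiv.Perm S acts on ℤ^S by permuting coordinates. An element (c, θ) of G has finite order if and only if for every orbit O of θ on S, the sum ∑_{s ∈ O} c(s) equals 0. -/
open Finset

/-- The coordinate-permuting action of `Equiv.Perm S` on `ℤ^S`: `(θ · c) s = c (θ⁻¹ s)`. -/
def permAct {S : Type*} : Equiv.Perm S →* MulAut (Multiplicative (S → ℤ)) where
  toFun θ :=
    { toFun := fun c => Multiplicative.ofAdd fun s => Multiplicative.toAdd c (θ⁻¹ s)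
      invFun := fun c => Multiplicative.ofAdd fun s => Multiplicative.toAdd c (θ s)
      left_inv := fun c => by simp
      right_inv := fun c => by simp
      map_mul' := fun c d => rfl }
  map_one' := rfl
  map_mul' := fun θ θ' => rfl

private lemma sum_range_mul_per (h : ℕ → ℤ) (d : ℕ) (hp : ∀ k, h (k + d) = h k) (q : ℕ) :
    ∑ k ∈ range (q * d), h k = q • ∑ k ∈ range d, h k := by
  have aux : ∀ j k, h (k + j * d) = h k := by
    intro j
    induction j with
    | zero => simp
    | succ j ih => intro k; rw [Nat.succ_mul, ← Nat.add_assoc, hp, ih]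
  induction q with
  | zero => simp
  | succ q ih =>
    rw [Nat.succ_mul, Finset.sum_range_add, ih, succ_nsmul]
    congr 1
    refine Finset.sum_congr rfl fun i _ => ?_
    rw [Nat.add_comm, aux]

private lemma pow_formula {S : Type*} (θ : Equiv.Perm S) (c : S → ℤ) (n : ℕ) :
    (⟨Multiplicative.ofAdd c, θ⟩ : Multiplicative (S → ℤ) ⋊[permAct] Equiv.Perm S) ^ n
      = ⟨Multiplicative.ofAdd fun s => ∑ k ∈ Finset.range n, c ((θ⁻¹ ^ k) s), θ ^ n⟩ := by
  induction n with
  | zero =>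
    have h : (fun s => ∑ k ∈ Finset.range 0, c ((θ⁻¹ ^ k) s)) = fun _ => (0 : ℤ) := by
      funext s; simp
    rw [pow_zero, h, pow_zero]
    rfl
  | succ n ih =>
    rw [pow_succ, ih]
    refine SemidirectProduct.ext ?_ (by show θ ^ n * θ = θ ^ (n+1); rw [pow_succ])
    show Multiplicative.ofAdd _ * permAct (θ ^ n) (Multiplicative.ofAdd c) = _
    refine Multiplicative.toAdd.injective (funext fun s => ?_)
    show (∑ k ∈ Finset.range n, c ((θ⁻¹ ^ k) s)) + c ((θ ^ n)⁻¹ s)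
        = ∑ k ∈ Finset.range (n + 1), c ((θ⁻¹ ^ k) s)
    rw [Finset.sum_range_succ, inv_pow]

/-- In `G = ℤ^S ⋊ Equiv.Perm S`, the element `(c, θ)` has finite
order iff the sum of `c` over every orbit of `θ` is zero. -/
theorem stmt4 {S : Type*} [Fintype S] [DecidableEq S] (θ : Equiv.Perm S) (c : S → ℤ) :
    IsOfFinOrder
        (⟨Multiplicative.ofAdd c, θ⟩ : Multiplicative (S → ℤ) ⋊[permAct] Equiv.Perm S) ↔
      ∀ s : S, ∑ t ∈ Finset.univ.filter (fun t => θ.SameCycle s t), c t = 0 := by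
  have hdpos : ∀ s : S, 0 < Function.minimalPeriod (⇑θ⁻¹) s := by
    intro s
    have hpp : Function.IsPeriodicPt (⇑θ⁻¹) (orderOf θ⁻¹) s := by
      show (⇑θ⁻¹)^[orderOf θ⁻¹] s = s
      rw [Equiv.Perm.iterate_eq_pow, pow_orderOf_eq_one]; rfl
    exact hpp.minimalPeriod_pos (orderOf_pos θ⁻¹)
  have orbit_sum : ∀ s : S,
      ∑ t ∈ Finset.univ.filter (fun t => θ.SameCycle s t), c t
        = ∑ k ∈ range (Function.minimalPeriod (⇑θ⁻¹) s), c ((θ⁻¹ ^ k) s) := by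
    intro s
    set d := Function.minimalPeriod (⇑θ⁻¹) s with hd
    have himg : Finset.univ.filter (fun t => θ.SameCycle s t)
        = (range d).image (fun k => (θ⁻¹ ^ k) s) := by
      ext t
      simp only [Finset.mem_filter, Finset.mem_univ, true_and, Finset.mem_image,
        Finset.mem_range]
      constructor
      · intro ht
        have ht' : (θ⁻¹).SameCycle s t := Equiv.Perm.SameCycle.inv ht
        obtain ⟨i, _, hi⟩ := ht'.exists_pow_eq'
        refine ⟨i % d, Nat.mod_lt _ (hdpos s), ?_⟩
        rw [← hi, ← Equiv.Perm.iterate_eq_pow, ← Equiv.Perm.iterate_eq_pow, hd,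
          Function.iterate_mod_minimalPeriod_eq]
      · rintro ⟨k, _, rfl⟩
        exact Equiv.Perm.SameCycle.of_inv ⟨k, rfl⟩
    rw [himg, Finset.sum_image]
    intro a ha b hb hab
    simp only [Finset.mem_coe, Finset.mem_range] at ha hb
    exact Function.iterate_injOn_Iio_minimalPeriod (f := ⇑θ⁻¹) (x := s) ha hb
      (by beta_reduce; rw [Equiv.Perm.iterate_eq_pow, Equiv.Perm.iterate_eq_pow]; exact hab)
  have key : ∀ (n : ℕ), θ ^ n = 1 → ∀ s : S,
      ∑ k ∈ range n, c ((θ⁻¹ ^ k) s)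
        = (n / Function.minimalPeriod (⇑θ⁻¹) s)
            • ∑ t ∈ Finset.univ.filter (fun t => θ.SameCycle s t), c t := by
    intro n hn s
    set d := Function.minimalPeriod (⇑θ⁻¹) s with hd
    have hper : Function.IsPeriodicPt (⇑θ⁻¹) n s := by
      show (⇑θ⁻¹)^[n] s = s
      rw [Equiv.Perm.iterate_eq_pow, inv_pow, hn, inv_one]; rfl
    obtain ⟨q, hq⟩ := hper.minimalPeriod_dvd
    have hp : ∀ k, c ((θ⁻¹ ^ (k + d)) s) = c ((θ⁻¹ ^ k) s) := by
      intro k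
      have h1 : (θ⁻¹ ^ d) s = s := Function.isPeriodicPt_minimalPeriod (⇑θ⁻¹) s
      rw [pow_add, Equiv.Perm.mul_apply, h1]
    rw [orbit_sum s, hq, Nat.mul_comm d q,
      sum_range_mul_per (fun k => c ((θ⁻¹ ^ k) s)) d hp q,
      Nat.mul_div_cancel _ (hdpos s)]
  constructor
  · intro hfin s
    obtain ⟨n, hn, hpow⟩ := isOfFinOrder_iff_pow_eq_one.mp hfin
    rw [pow_formula] at hpow
    have hθ : θ ^ n = 1 := congrArg SemidirectProduct.right hpow
    have hleft : ∑ k ∈ range n, c ((θ⁻¹ ^ k) s) = 0 := by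
      have h1 := congrFun
        (congrArg Multiplicative.toAdd (congrArg SemidirectProduct.left hpow)) s
      simpa using h1
    have hd : Function.minimalPeriod (⇑θ⁻¹) s ∣ n := by
      refine Function.IsPeriodicPt.minimalPeriod_dvd ?_
      show (⇑θ⁻¹)^[n] s = s
      rw [Equiv.Perm.iterate_eq_pow, inv_pow, hθ, inv_one]; rfl
    have hqpos : 0 < n / Function.minimalPeriod (⇑θ⁻¹) s :=
      Nat.div_pos (Nat.le_of_dvd hn hd) (hdpos s)
    have h := key n hθ s
    rw [hleft, nsmul_eq_mul] at h
    rcases mul_eq_zero.mp h.symm with h1 | h2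
    · exact absurd (Nat.cast_eq_zero.mp h1) hqpos.ne'
    · exact h2
  · intro horb
    refine isOfFinOrder_iff_pow_eq_one.mpr ⟨orderOf θ, orderOf_pos θ, ?_⟩
    rw [pow_formula]
    refine SemidirectProduct.ext ?_ (by simp [pow_orderOf_eq_one])
    refine Multiplicative.toAdd.injective (funext fun s => ?_)
    show (∑ k ∈ range (orderOf θ), c ((θ⁻¹ ^ k) s)) = 0
    rw [key (orderOf θ) (pow_orderOf_eq_one θ) s, horb s, smul_zero]
end

section
/- Let S be a finite set and G = ℤ^S ⋊ Equiv.Perm S with the coordinate-permuting action. For θ ∈ Equiv.Perm S and c, c' ∈ ℤ^S, the elements (c, θ) and (c', θ) are conjugate in G by an element of the subgroup ℤ^S × {1} if and only if for every orbit O of θ, ∑_{s ∈ O} c(s) = ∑_{s ∈ O} c'(s). -/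
open Finset

section aux
open Equiv Equiv.Perm


lemma key_aux {S : Type*} [Fintype S] [DecidableEq S] (θ : Equiv.Perm S) (d : S → ℤ)
    (hd : ∀ s : S, ∑ t ∈ Finset.univ.filter (fun t => θ.SameCycle s t), d t = 0) :
    ∃ x : S → ℤ, ∀ s, d s = x s - x (θ⁻¹ s) := by
  classical
  let st : Setoid S := ⟨θ.SameCycle, ⟨Equiv.Perm.SameCycle.refl θ, Equiv.Perm.SameCycle.symm,
    Equiv.Perm.SameCycle.trans⟩⟩
  let r : S → S := fun s => Quotient.out (Quotient.mk st s)
  have hr : ∀ s, θ.SameCycle (r s) s := fun s => by have := Quotient.exact (Quotient.out_eq (Quotient.mk st s)); exact this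
  have hrr : ∀ s t, θ.SameCycle s t → r s = r t := fun s t h => by
    simp only [r]; congr 1; exact Quotient.sound h
  have hex : ∀ s, ∃ k : ℕ, (θ ^ k) (r s) = s := fun s => by
    obtain ⟨i, _, hi⟩ := (hr s).exists_pow_eq'
    exact ⟨i, hi⟩
  let m : S → ℕ := fun s => Nat.find (hex s)
  have hm : ∀ s, (θ ^ m s) (r s) = s := fun s => Nat.find_spec (hex s)
  have hmin : ∀ s, ∀ p < m s, (θ ^ p) (r s) ≠ s := fun s p hp => Nat.find_min (hex s) hp
  refine ⟨fun s => ∑ j ∈ Finset.range (m s), d ((θ ^ (j + 1)) (r s)), fun s => ?_⟩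
  dsimp only
  have hrc : r (θ⁻¹ s) = r s :=
    hrr _ _ ((Equiv.Perm.sameCycle_symm_apply_right).2 (SameCycle.refl θ s)).symm
  rcases Nat.eq_zero_or_pos (m s) with h0 | hpos
  · -- s = r s
    have hs : r s = s := by have := hm s; rwa [h0, pow_zero, Equiv.Perm.one_apply] at this
    obtain ⟨k, hkdef⟩ : ∃ k, m (θ⁻¹ s) = k := ⟨_, rfl⟩
    have hki : (θ ^ k) s = θ⁻¹ s := by
      have := hm (θ⁻¹ s); rwa [hkdef, hrc, hs] at this
    have hk1 : (θ ^ (k + 1)) s = s := by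
      rw [pow_succ', Equiv.Perm.mul_apply, hki, Equiv.Perm.inv_def, Equiv.apply_symm_apply]
    have hminp : ∀ p : ℕ, 0 < p → p ≤ k → (θ ^ p) s ≠ s := by
      intro p hp hpk hps
      have hstep : (θ ^ (p - 1)) (r (θ⁻¹ s)) = θ⁻¹ s := by
        rw [hrc, hs]
        apply θ.injective
        rw [Equiv.Perm.inv_def, Equiv.apply_symm_apply, ← Equiv.Perm.mul_apply, ← pow_succ']
        have hp1 : p - 1 + 1 = p := by omega
        rw [hp1, hps]
      exact hmin (θ⁻¹ s) (p - 1) (by omega) hstep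
    have hinj : ∀ i ∈ Finset.range (k+1), ∀ j ∈ Finset.range (k+1),
        (θ ^ i) s = (θ ^ j) s → i = j := by
      intro i hi j hj hij
      by_contra hne
      wlog hij' : i < j generalizing i j
      · exact this j hj i hi hij.symm (Ne.symm hne) (by omega)
      have h1 : (θ ^ (i + (j - i))) s = (θ ^ i) s := by
        rw [Nat.add_sub_cancel' (le_of_lt hij')]; exact hij.symm
      rw [pow_add, Equiv.Perm.mul_apply] at h1
      have h2 : (θ ^ (j - i)) s = s := (θ ^ i).injective h1
      exact hminp (j - i) (by omega) (by simp only [Finset.mem_range] at hj; omega) h2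
    have hq : ∀ q : ℕ, (θ ^ ((k+1) * q)) s = s := by
      intro q; induction q with
      | zero => simp
      | succ n ih => rw [Nat.mul_succ, pow_add, Equiv.Perm.mul_apply, hk1, ih]
    have hper : ∀ j : ℕ, (θ ^ j) s = (θ ^ (j % (k+1))) s := by
      intro j
      conv_lhs => rw [← Nat.mod_add_div j (k+1)]
      rw [pow_add, Equiv.Perm.mul_apply, hq]
    have himg : Finset.univ.filter (fun t => θ.SameCycle s t) =
        (Finset.range (k+1)).image (fun j => (θ ^ j) s) := by
      ext t
      simp only [Finset.mem_filter, Finset.mem_univ, true_and, Finset.mem_image,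
        Finset.mem_range]
      constructor
      · rintro ht
        obtain ⟨i, _, hi⟩ := ht.exists_pow_eq'
        exact ⟨i % (k+1), Nat.mod_lt _ (by omega), by rw [← hper]; exact hi⟩
      · rintro ⟨j, _, rfl⟩
        exact (Equiv.Perm.sameCycle_pow_right).2 (SameCycle.refl θ s)
    have hsum : ∑ j ∈ Finset.range (k+1), d ((θ ^ j) s) = 0 := by
      rw [← Finset.sum_image hinj, ← himg]; exact hd s
    rw [Finset.sum_range_succ'] at hsum
    simp only [pow_zero, Equiv.Perm.one_apply] at hsum
    rw [h0, hkdef, hrc, hs]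
    simp only [Finset.range_zero, Finset.sum_empty]
    linarith
  · -- m s = k + 1 case
    obtain ⟨k, hk⟩ : ∃ k, m s = k + 1 := ⟨m s - 1, by omega⟩
    have hks : (θ ^ (k+1)) (r s) = s := by rw [← hk]; exact hm s
    have hkinv : (θ ^ k) (r s) = θ⁻¹ s := by
      apply θ.injective
      rw [Equiv.Perm.inv_def, Equiv.apply_symm_apply, ← Equiv.Perm.mul_apply, ← pow_succ', hks]
    have hmk : m (θ⁻¹ s) = k := by
      have hle : m (θ⁻¹ s) ≤ k :=
        Nat.find_le (show (θ ^ k) (r (θ⁻¹ s)) = θ⁻¹ s by rw [hrc, hkinv])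
      have hge : k ≤ m (θ⁻¹ s) := by
        by_contra h
        push_neg at h
        have hst : (θ ^ (m (θ⁻¹ s) + 1)) (r s) = s := by
          rw [pow_succ', Equiv.Perm.mul_apply, ← hrc, hm (θ⁻¹ s), Equiv.Perm.inv_def, Equiv.apply_symm_apply]
        exact hmin s (m (θ⁻¹ s) + 1) (by omega) hst
      omega
    rw [hk, hmk, hrc, Finset.sum_range_succ, hks]
    ring

lemma key_fwd {S : Type*} [Fintype S] [DecidableEq S] (θ : Equiv.Perm S) (d : S → ℤ)
    (x : S → ℤ) (hx : ∀ s, d s = x s - x (θ⁻¹ s)) (s : S) :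
    ∑ t ∈ Finset.univ.filter (fun t => θ.SameCycle s t), d t = 0 := by
  have hmap : (Finset.univ.filter (fun t => θ.SameCycle s t)).map
      (θ⁻¹ : Equiv.Perm S).toEmbedding = Finset.univ.filter (fun t => θ.SameCycle s t) := by
    ext t
    simp only [Finset.mem_map_equiv, Finset.mem_filter, Finset.mem_univ, true_and]
    show θ.SameCycle s ((θ⁻¹ : Equiv.Perm S).symm t) ↔ θ.SameCycle s t
    simp only [Equiv.Perm.inv_def, Equiv.symm_symm]
    exact Equiv.Perm.sameCycle_apply_right
  calc ∑ t ∈ Finset.univ.filter (fun t => θ.SameCycle s t), d t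
      = ∑ t ∈ Finset.univ.filter (fun t => θ.SameCycle s t), (x t - x (θ⁻¹ t)) := by
        exact Finset.sum_congr rfl fun t _ => hx t
    _ = (∑ t ∈ Finset.univ.filter (fun t => θ.SameCycle s t), x t)
        - ∑ t ∈ Finset.univ.filter (fun t => θ.SameCycle s t), x (θ⁻¹ t) := by
        rw [Finset.sum_sub_distrib]
    _ = 0 := by
        rw [sub_eq_zero]
        conv_lhs => rw [← hmap]
        rw [Finset.sum_map]
        rfl
end aux

/-- In `G = ℤ^S ⋊ Equiv.Perm S`, the elements `(c, θ)` and `(c', θ)`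
are conjugate by an element of `ℤ^S × {1}` iff for every orbit of `θ` the sums of `c`
and `c'` over that orbit coincide. -/
theorem stmt5 {S : Type*} [Fintype S] [DecidableEq S] (θ : Equiv.Perm S) (c c' : S → ℤ) :
    (∃ x : S → ℤ,
        (⟨Multiplicative.ofAdd x, 1⟩ : Multiplicative (S → ℤ) ⋊[permAct] Equiv.Perm S) *
            ⟨Multiplicative.ofAdd c, θ⟩ * (⟨Multiplicative.ofAdd x, 1⟩ :
              Multiplicative (S → ℤ) ⋊[permAct] Equiv.Perm S)⁻¹ =
          ⟨Multiplicative.ofAdd c', θ⟩) ↔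
      ∀ s : S, ∑ t ∈ Finset.univ.filter (fun t => θ.SameCycle s t), c t =
        ∑ t ∈ Finset.univ.filter (fun t => θ.SameCycle s t), c' t := by
  have hconj : ∀ x : S → ℤ,
      ((⟨Multiplicative.ofAdd x, 1⟩ : Multiplicative (S → ℤ) ⋊[permAct] Equiv.Perm S) *
            ⟨Multiplicative.ofAdd c, θ⟩ * (⟨Multiplicative.ofAdd x, 1⟩ :
              Multiplicative (S → ℤ) ⋊[permAct] Equiv.Perm S)⁻¹ =
          ⟨Multiplicative.ofAdd c', θ⟩) ↔
        ∀ s, c' s - c s = x s - x (θ⁻¹ s) := by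
    intro x
    rw [SemidirectProduct.ext_iff]
    simp only [SemidirectProduct.mul_left, SemidirectProduct.mul_right, mul_one, one_mul,
      map_one]
    constructor
    · rintro ⟨h1, -⟩
      intro s
      have := congrFun (congrArg Multiplicative.toAdd h1) s
      simp only [SemidirectProduct.inv_left, SemidirectProduct.inv_right, map_one, inv_one,
        MulAut.one_apply, toAdd_mul, Pi.add_apply, toAdd_ofAdd, toAdd_inv, Pi.neg_apply,
        permAct, MonoidHom.coe_mk, OneHom.coe_mk, MulEquiv.coe_mk, Equiv.coe_fn_mk] at this
      change x s + c s + -(x (θ⁻¹ s)) = c' s at this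
      omega
    · intro h
      refine ⟨?_, rfl⟩
      show _ = Multiplicative.ofAdd c'
      rw [show Multiplicative.ofAdd c' = Multiplicative.ofAdd (fun s => x s + c s + (-(x (θ⁻¹ s)))) from
        congrArg _ (funext fun s => by have := h s; omega)]
      rfl
  constructor
  · rintro ⟨x, hx⟩ s
    have h := key_fwd θ (fun s => c' s - c s) x ((hconj x).1 hx) s
    rw [Finset.sum_sub_distrib] at h
    omega
  · intro h
    obtain ⟨x, hx⟩ := key_aux θ (fun s => c' s - c s) (fun s => by
      rw [Finset.sum_sub_distrib, h s]; ring)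
    exact ⟨x, (hconj x).2 hx⟩
end

section
/- Let S be a finite set, G = ℤ^S ⋊ Equiv.Perm S with the coordinate-permuting action, θ ∈ Equiv.Perm S, and c ∈ ℤ^S such that the sum of c over every orbit of θ is zero. Then (c, θ) is conjugate in G to (0, θ) by an element of ℤ^S × {1}. -/
open Finset

private lemma stmt6_aux {S : Type*} [Fintype S] [DecidableEq S] (θ : Equiv.Perm S) (c : S → ℤ)
    (h : ∀ s : S, ∑ t ∈ Finset.univ.filter (fun t => θ.SameCycle s t), c t = 0) :
    ∃ x : S → ℤ, ∀ s, x (θ s) = x s - c (θ s) := by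
  let sc : Setoid S := ⟨θ.SameCycle, ⟨Equiv.Perm.SameCycle.refl θ, Equiv.Perm.SameCycle.symm,
    Equiv.Perm.SameCycle.trans⟩⟩
  let r : S → S := fun s => (Quotient.mk sc s).out
  have hr : ∀ s, θ.SameCycle (r s) s := fun s => Quotient.mk_out (s := sc) s
  have hrc : ∀ s, r (θ s) = r s := by
    intro s
    have : (Quotient.mk sc (θ s)) = Quotient.mk sc s :=
      Quotient.sound ((θ.sameCycle_apply_right (x := s) (y := s)).2
        (Equiv.Perm.SameCycle.refl θ s)).symm
    simp [r, this]
  have hre : ∀ s, ∃ j : ℕ, (θ ^ j) (r s) = s := by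
    intro s
    obtain ⟨i, _, _, hi⟩ := (hr s).exists_pow_eq θ
    exact ⟨i, hi⟩
  let k : S → ℕ := fun s => Nat.find (hre s)
  have hk : ∀ s, (θ ^ k s) (r s) = s := fun s => Nat.find_spec (hre s)
  have hkmin : ∀ s, ∀ j, j < k s → (θ ^ j) (r s) ≠ s := fun s j hj => Nat.find_min (hre s) hj
  refine ⟨fun s => -∑ i ∈ range (k s), c ((θ ^ (i + 1)) (r s)), fun s => ?_⟩
  have hks1 : (θ ^ (k s + 1)) (r s) = θ s := by
    rw [pow_succ', Equiv.Perm.mul_apply, hk]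
  have hle : k (θ s) ≤ k s + 1 := Nat.find_le (by rw [hrc]; exact hks1)
  rcases eq_or_lt_of_le hle with heq | hlt
  · simp only [hrc, heq, Finset.sum_range_succ, hks1]
    ring
  · have hm : (θ ^ k (θ s)) (r s) = θ s := by rw [← hrc s]; exact hk (θ s)
    have hm0 : k (θ s) = 0 := by
      by_contra h0
      obtain ⟨j, hj⟩ := Nat.exists_eq_succ_of_ne_zero h0
      have : (θ ^ j) (r s) = s := by
        apply θ.injective
        rw [← Equiv.Perm.mul_apply, ← pow_succ', ← Nat.succ_eq_add_one, ← hj, hm]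
      exact hkmin s j (by omega) this
    have hθs : θ s = r s := by rw [← hm, hm0, pow_zero]; rfl
    have hper : (θ ^ (k s + 1)) (r s) = r s := by rw [hks1, hθs]
    have hmul : ∀ q : ℕ, (θ ^ ((k s + 1) * q)) (r s) = r s := by
      intro q; induction q with
      | zero => simp
      | succ n ih => rw [mul_add, mul_one, pow_add, Equiv.Perm.mul_apply, hper, ih]
    have hmod : ∀ i : ℕ, (θ ^ (i % (k s + 1))) (r s) = (θ ^ i) (r s) := by
      intro i
      conv_rhs => rw [← Nat.mod_add_div i (k s + 1)]
      rw [pow_add, Equiv.Perm.mul_apply, hmul]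
    have hinj : ∀ i j : ℕ, i < j → j < k s + 1 → (θ ^ i) (r s) ≠ (θ ^ j) (r s) := by
      intro i j hij hj hij'
      have hd : (θ ^ (j - i)) (r s) = r s := by
        have h1 : (θ ^ (i + (j - i))) (r s) = (θ ^ i) (r s) := by
          rw [Nat.add_sub_cancel' hij.le, ← hij']
        rw [pow_add, Equiv.Perm.mul_apply] at h1
        exact (θ ^ i).injective h1
      have h2 : (θ ^ (k s - (j - i))) (r s) = s := by
        have h3 : (θ ^ (k s - (j - i) + (j - i))) (r s) = s := by
          rw [Nat.sub_add_cancel (by omega), hk]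
        rwa [pow_add, Equiv.Perm.mul_apply, hd] at h3
      exact hkmin s _ (by omega) h2
    have hsum : ∑ i ∈ range (k s + 1), c ((θ ^ i) (r s)) = 0 := by
      rw [← h s]
      refine Finset.sum_bij (fun i _ => (θ ^ i) (r s)) ?_ ?_ ?_ (fun i _ => rfl)
      · intro i _
        simp only [Finset.mem_filter, Finset.mem_univ, true_and]
        exact ((hr s).symm).trans ⟨(i : ℤ), by simp [zpow_natCast]⟩
      · intro i hi j hj hij
        simp only [Finset.mem_range] at hi hj
        by_contra hne
        rcases Nat.lt_or_ge i j with h' | h'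
        · exact hinj i j h' hj hij
        · exact hinj j i (by omega) hi hij.symm
      · intro t ht
        simp only [Finset.mem_filter, Finset.mem_univ, true_and] at ht
        obtain ⟨i, _, _, hi⟩ := ((hr s).trans ht).exists_pow_eq θ
        exact ⟨i % (k s + 1), Finset.mem_range.2 (Nat.mod_lt _ (by omega)),
          by show (θ ^ (i % (k s + 1))) (r s) = t; rw [hmod, hi]⟩
    simp only [hrc, hm0, Finset.range_zero, Finset.sum_empty, neg_zero]
    rw [hθs]
    rw [Finset.sum_range_succ'] at hsum
    simp only [pow_zero, Equiv.Perm.coe_one, id_eq] at hsum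
    linarith

/-- If the sum of `c` over every orbit of `θ` is zero, then `(c, θ)`
is conjugate to `(0, θ)` in `ℤ^S ⋊ Equiv.Perm S` by an element of `ℤ^S × {1}`. -/
theorem stmt6 {S : Type*} [Fintype S] [DecidableEq S] (θ : Equiv.Perm S) (c : S → ℤ)
    (h : ∀ s : S, ∑ t ∈ Finset.univ.filter (fun t => θ.SameCycle s t), c t = 0) :
    ∃ x : S → ℤ,
      (⟨Multiplicative.ofAdd x, 1⟩ : Multiplicative (S → ℤ) ⋊[permAct] Equiv.Perm S) *
          ⟨Multiplicative.ofAdd c, θ⟩ * (⟨Multiplicative.ofAdd x, 1⟩ :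
            Multiplicative (S → ℤ) ⋊[permAct] Equiv.Perm S)⁻¹ =
        ⟨Multiplicative.ofAdd (0 : S → ℤ), θ⟩ := by
  obtain ⟨x, hx⟩ := stmt6_aux θ c h
  refine ⟨x, SemidirectProduct.ext ?_ (by simp)⟩
  show Multiplicative.ofAdd x * permAct 1 (Multiplicative.ofAdd c) *
    permAct (1 * θ) (permAct ((1 : Equiv.Perm S))⁻¹ (Multiplicative.ofAdd x)⁻¹) = _
  simp only [map_one, one_mul, MulAut.one_apply]
  show Multiplicative.ofAdd x * Multiplicative.ofAdd c *
    permAct θ (Multiplicative.ofAdd x)⁻¹ = _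
  refine congrArg Multiplicative.ofAdd (funext fun t => ?_)
  have := hx (θ⁻¹ t)
  rw [show θ (θ⁻¹ t) = t from θ.apply_symm_apply t] at this
  show x t + c t + (- x (θ⁻¹ t)) = 0
  omega
end

section
/- Let S be a finite set, G = ℤ^S ⋊ Equiv.Perm S with the coordinate-permuting action, and θ ∈ Equiv.Perm S. Suppose C ∈ Equiv.Perm S centralizes θ. If c, c' ∈ ℤ^S satisfy ∑_{s ∈ C(O)} c(s) = ∑_{s ∈ O} c'(s) for every orbit O of θ, then (c, θ) and (c', θ) are conjugate in G. -/
open Finset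

section Aux
variable {S : Type*} [Fintype S] [DecidableEq S] (θ : Equiv.Perm S)

def deltaMap : (S → ℤ) →+ (S → ℤ) where
  toFun d := fun s => d (θ⁻¹ s) - d s
  map_zero' := by ext s; simp
  map_add' := fun a b => by ext s; simp [Pi.add_apply]; ring

lemma single_mem (t : S) :
    ((Pi.single (θ t) 1 : S → ℤ) - Pi.single t 1) ∈ (deltaMap θ).range := by
  refine ⟨Pi.single t 1, ?_⟩
  ext s
  simp only [deltaMap, AddMonoidHom.coe_mk, ZeroHom.coe_mk, Pi.sub_apply, Pi.single_apply]
  have : (θ⁻¹ s = t) ↔ (s = θ t) := by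
    constructor
    · rintro rfl; simp
    · rintro rfl; simp
  rw [if_congr this rfl rfl]

lemma zpow_single_mem (k : ℤ) (t : S) :
    ((Pi.single ((θ ^ k) t) 1 : S → ℤ) - Pi.single t 1) ∈ (deltaMap θ).range := by
  induction k using Int.induction_on with
  | zero => exact ⟨0, by simp [map_zero]⟩
  | succ n ih =>
      have h1 := single_mem θ ((θ ^ (n : ℤ)) t)
      have : ((θ ^ ((n : ℤ) + 1)) t) = θ ((θ ^ (n : ℤ)) t) := by
        rw [add_comm, zpow_one_add, Equiv.Perm.mul_apply]
      rw [this]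
      have := AddSubgroup.add_mem _ h1 ih
      convert this using 1
      abel
  | pred n ih =>
      have h1 := single_mem θ ((θ ^ (-(n : ℤ) - 1)) t)
      have hθ : θ ((θ ^ (-(n : ℤ) - 1)) t) = (θ ^ (-(n : ℤ))) t := by
        rw [← Equiv.Perm.mul_apply, ← zpow_one_add]
        norm_num
      rw [hθ] at h1
      have := AddSubgroup.add_mem _ (AddSubgroup.neg_mem _ h1) ih
      convert this using 1
      abel

lemma sameCycle_single_mem {t s : S} (hts : θ.SameCycle t s) :
    ((Pi.single s 1 : S → ℤ) - Pi.single t 1) ∈ (deltaMap θ).range := by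
  obtain ⟨k, hk⟩ := hts
  rw [← hk]
  exact zpow_single_mem θ k t

end Aux

section Key
variable {S : Type*} [Fintype S] [DecidableEq S] (θ : Equiv.Perm S)

def scSetoid : Setoid S :=
  ⟨θ.SameCycle, ⟨fun _ => Equiv.Perm.SameCycle.refl θ _,
    Equiv.Perm.SameCycle.symm, Equiv.Perm.SameCycle.trans⟩⟩

noncomputable def scRepr (s : S) : S := Quotient.out (Quotient.mk (scSetoid θ) s)

lemma scRepr_sameCycle (s : S) : θ.SameCycle (scRepr θ s) s :=
  Quotient.exact ((Quotient.mk (scSetoid θ) s).out_eq)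

lemma scRepr_eq_iff (s t : S) : scRepr θ s = scRepr θ t ↔ θ.SameCycle s t := by
  rw [scRepr, scRepr, Quotient.out_inj, Quotient.eq]
  rfl

lemma key (f : S → ℤ)
    (h0 : ∀ s, ∑ t ∈ Finset.univ.filter (fun t => θ.SameCycle s t), f t = 0) :
    ∃ d : S → ℤ, ∀ s, d (θ⁻¹ s) - d s = f s := by
  have hmem : (∑ s : S, f s • ((Pi.single s 1 : S → ℤ) - Pi.single (scRepr θ s) 1))
      ∈ (deltaMap θ).range := by
    refine AddSubgroup.sum_mem _ fun s _ => AddSubgroup.zsmul_mem _ ?_ _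
    exact sameCycle_single_mem θ (scRepr_sameCycle θ s)
  have heq : (∑ s : S, f s • ((Pi.single s 1 : S → ℤ) - Pi.single (scRepr θ s) 1)) = f := by
    have h1 : (∑ s : S, f s • (Pi.single s 1 : S → ℤ)) = f := by
      ext u
      simp [Finset.sum_apply, Pi.single_apply, Finset.sum_ite_eq]
    have h2 : (∑ s : S, f s • (Pi.single (scRepr θ s) 1 : S → ℤ)) = 0 := by
      ext u
      simp only [Finset.sum_apply, Pi.smul_apply, Pi.single_apply, smul_eq_mul,
        mul_ite, mul_one, mul_zero, Pi.zero_apply]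
      rw [Finset.sum_ite, Finset.sum_const_zero, add_zero]
      by_cases hex : ∃ s₀ : S, u = scRepr θ s₀
      · obtain ⟨s₀, hs₀⟩ := hex
        have hfil : Finset.univ.filter (fun x => u = scRepr θ x)
            = Finset.univ.filter (fun t => θ.SameCycle s₀ t) := by
          apply Finset.filter_congr
          intro x _
          simp only [hs₀, eq_iff_iff]
          rw [eq_comm, scRepr_eq_iff]
          exact ⟨fun h => h.symm, fun h => h.symm⟩
        rw [hfil, h0 s₀]
      · refine Finset.sum_eq_zero fun x hx => ?_
        exact absurd ⟨x, (Finset.mem_filter.mp hx).2⟩ hex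
    calc (∑ s : S, f s • ((Pi.single s 1 : S → ℤ) - Pi.single (scRepr θ s) 1))
        = (∑ s : S, f s • (Pi.single s 1 : S → ℤ))
          - (∑ s : S, f s • (Pi.single (scRepr θ s) 1 : S → ℤ)) := by
          rw [← Finset.sum_sub_distrib]
          congr 1; ext s; rw [smul_sub]
      _ = f := by rw [h1, h2, sub_zero]
  rw [heq] at hmem
  obtain ⟨d, hd⟩ := hmem
  exact ⟨d, fun s => congrFun hd s⟩

end Key

/-- Let `C` centralize `θ` in `Equiv.Perm S`. If for every orbit `O`
of `θ` the sum of `c` over `C(O)` equals the sum of `c'` over `O` (here the orbit of `s`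
is its `SameCycle`-class and `C(O_s) = O_{C s}`), then `(c, θ)` and `(c', θ)` are
conjugate in `ℤ^S ⋊ Equiv.Perm S`. -/
theorem stmt17 {S : Type*} [Fintype S] [DecidableEq S] (θ C : Equiv.Perm S)
    (hC : C * θ = θ * C) (c c' : S → ℤ)
    (h : ∀ s : S, ∑ t ∈ Finset.univ.filter (fun t => θ.SameCycle (C s) t), c t =
        ∑ t ∈ Finset.univ.filter (fun t => θ.SameCycle s t), c' t) :
    IsConj (⟨Multiplicative.ofAdd c, θ⟩ : Multiplicative (S → ℤ) ⋊[permAct] Equiv.Perm S)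
      ⟨Multiplicative.ofAdd c', θ⟩ := by
  have hcomm : Commute C θ := hC
  have hCθ : ∀ (i : ℤ) (s : S), (θ ^ i) (C s) = C ((θ ^ i) s) := by
    intro i s
    have h1 : C * θ ^ i = θ ^ i * C := (hcomm.zpow_right i).eq
    have := congrFun (congrArg (fun (e : Equiv.Perm S) => (e : S → S)) h1) s
    simpa [Equiv.Perm.mul_apply] using this.symm
  have hSC : ∀ s t : S, θ.SameCycle s t ↔ θ.SameCycle (C s) (C t) := by
    intro s t
    constructor
    · rintro ⟨i, rfl⟩
      exact ⟨i, hCθ i s⟩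
    · rintro ⟨i, hi⟩
      refine ⟨i, ?_⟩
      rw [hCθ i s] at hi
      exact C.injective hi
  -- orbit sums of f := c ∘ C - c' vanish
  have h0 : ∀ s : S, ∑ t ∈ Finset.univ.filter (fun t => θ.SameCycle s t),
      (c (C t) - c' t) = 0 := by
    intro s
    rw [Finset.sum_sub_distrib]
    have hre : ∑ t ∈ Finset.univ.filter (fun t => θ.SameCycle s t), c (C t)
        = ∑ u ∈ Finset.univ.filter (fun u => θ.SameCycle (C s) u), c u := by
      refine Finset.sum_nbij' (fun t => C t) (fun u => C⁻¹ u) ?_ ?_ ?_ ?_ ?_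
      · intro t ht
        simp only [Finset.mem_filter, Finset.mem_univ, true_and] at ht ⊢
        exact (hSC s t).mp ht
      · intro u hu
        simp only [Finset.mem_filter, Finset.mem_univ, true_and] at hu ⊢
        have := (hSC s (C⁻¹ u)).mpr
        simp only [Equiv.Perm.inv_def, Equiv.apply_symm_apply] at this
        exact this hu
      · intro t _; simp
      · intro u _; simp
      · intro t _; rfl
    rw [hre, h s, sub_self]
  obtain ⟨d, hd⟩ := key θ _ h0
  rw [isConj_iff]
  refine ⟨⟨Multiplicative.ofAdd d, C⁻¹⟩, ?_⟩
  rw [mul_inv_eq_iff_eq_mul]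
  have hright : C⁻¹ * θ = θ * C⁻¹ := (hcomm.inv_left).eq
  have hleft : (Multiplicative.ofAdd d) * permAct C⁻¹ (Multiplicative.ofAdd c)
      = Multiplicative.ofAdd c' * permAct θ (Multiplicative.ofAdd d) := by
    apply Multiplicative.toAdd.injective
    funext s
    show d s + c ((C⁻¹)⁻¹ s) = c' s + d (θ⁻¹ s)
    rw [inv_inv]
    have := hd s
    linarith
  refine SemidirectProduct.ext ?_ ?_
  · simpa [SemidirectProduct.mul_left] using hleft
  · simpa [SemidirectProduct.mul_right] using hright
end

section
/- Let S be a finite set and θ ∈ Equiv.Perm S a cycle whose cyclic group acts transitively on S (a full cycle). In G = ℤ^S ⋊ Equiv.Perm S, two elements (c, θ) and (c', θ) are conjugate by an element of ℤ^S × {1} if and only if ∑_{s ∈ S} c(s) = ∑_{s ∈ S} c'(s). -/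
open Finset

lemma exists_potential {S : Type*} [Fintype S] [DecidableEq S] (θ : Equiv.Perm S)
    (hθ : ∀ s t : S, θ.SameCycle s t) (d : S → ℤ) (hd : ∑ s, d s = 0) :
    ∃ x : S → ℤ, ∀ s, x s - x (θ⁻¹ s) = d s := by
  cases isEmpty_or_nonempty S with
  | inl h => exact ⟨0, fun s => h.elim s⟩
  | inr h =>
  obtain ⟨s₀⟩ := h
  set n := orderOf θ with hn
  have hnpos : 0 < n := orderOf_pos θ
  have hex : ∀ s : S, ∃ k, (θ ^ k) s₀ = s := fun s => by
    obtain ⟨i, _, hi⟩ := (hθ s₀ s).exists_pow_eq'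
    exact ⟨i, hi⟩
  have key : ∀ i j, i ≤ j → j < n → (θ ^ i) s₀ = (θ ^ j) s₀ → i = j := by
    intro i j hij hj h
    have h1 : (θ ^ (j - i)) s₀ = s₀ := by
      apply (θ ^ i).injective
      have : θ ^ i * θ ^ (j - i) = θ ^ j := by
        rw [← pow_add, Nat.add_sub_cancel' hij]
      calc (θ ^ i) ((θ ^ (j - i)) s₀) = (θ ^ i * θ ^ (j - i)) s₀ := rfl
        _ = (θ ^ j) s₀ := by rw [this]
        _ = (θ ^ i) s₀ := h.symm
    have hone : θ ^ (j - i) = 1 := by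
      ext t
      obtain ⟨m, hm⟩ := hθ s₀ t
      have hc : θ ^ ((j - i : ℕ) : ℤ) * θ ^ m = θ ^ m * θ ^ ((j - i : ℕ) : ℤ) := by
        rw [← zpow_add, ← zpow_add, add_comm]
      calc (θ ^ (j - i)) t = (θ ^ (j - i)) ((θ ^ m) s₀) := by rw [hm]
        _ = (θ ^ ((j - i : ℕ) : ℤ) * θ ^ m) s₀ := by rw [zpow_natCast]; rfl
        _ = (θ ^ m) ((θ ^ ((j - i : ℕ) : ℤ)) s₀) := by rw [hc]; rfl
        _ = (θ ^ m) s₀ := by rw [zpow_natCast, h1]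
        _ = t := hm
    have hdvd : n ∣ j - i := orderOf_dvd_of_pow_eq_one hone
    have : j - i = 0 := Nat.eq_zero_of_dvd_of_lt hdvd (lt_of_le_of_lt (Nat.sub_le _ _) hj)
    omega
  have inj : ∀ i j, i < n → j < n → (θ ^ i) s₀ = (θ ^ j) s₀ → i = j := by
    intro i j hi hj h
    rcases le_total i j with hij | hij
    · exact key i j hij hj h
    · exact (key j i hij hi h.symm).symm
  let K : S → ℕ := fun s => Nat.find (hex s)
  have hK : ∀ s, (θ ^ K s) s₀ = s := fun s => Nat.find_spec (hex s)
  have hKlt : ∀ s, K s < n := fun s => by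
    obtain ⟨i, hin, hi⟩ := (hθ s₀ s).exists_pow_eq'
    exact lt_of_le_of_lt (Nat.find_le hi) hin
  have hsum : ∑ j ∈ range n, d ((θ ^ j) s₀) = ∑ s : S, d s := by
    apply Finset.sum_nbij' (i := fun j => (θ ^ j) s₀) (j := fun s => K s)
    · intro a _; exact mem_univ _
    · intro a _; exact mem_range.2 (hKlt a)
    · intro a ha
      exact inj _ _ (hKlt _) (mem_range.1 ha) (hK _)
    · intro a _; exact hK a
    · intro a _; rfl
  set x : S → ℤ := fun s => ∑ j ∈ range (K s + 1), d ((θ ^ j) s₀) with hx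
  refine ⟨x, fun s => ?_⟩
  by_cases h0 : K s = 0
  · have hs : s = s₀ := by rw [← hK s, h0, pow_zero]; rfl
    have hKinv : K (θ⁻¹ s) = n - 1 := by
      apply inj _ _ (hKlt _) (by omega)
      rw [hK, hs]
      apply θ.injective
      have hpow : θ * θ ^ (n - 1) = 1 := by
        rw [← pow_succ', show n - 1 + 1 = n by omega]
        exact pow_orderOf_eq_one θ
      calc θ (θ⁻¹ s₀) = s₀ := by simp
        _ = (θ * θ ^ (n - 1)) s₀ := by rw [hpow]; rfl
        _ = θ ((θ ^ (n - 1)) s₀) := rfl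
    simp only [hx, h0, hKinv]
    rw [Nat.sub_add_cancel hnpos, hsum, hd]
    simp [hs]
  · have hKinv : K (θ⁻¹ s) = K s - 1 := by
      apply inj _ _ (hKlt _) (by have := hKlt s; omega)
      rw [hK]
      symm
      apply θ.injective
      have h2 : θ * θ ^ (K s - 1) = θ ^ K s := by
        rw [← pow_succ', show K s - 1 + 1 = K s by omega]
      calc θ ((θ ^ (K s - 1)) s₀) = (θ * θ ^ (K s - 1)) s₀ := rfl
        _ = (θ ^ K s) s₀ := by rw [h2]
        _ = s := hK s
        _ = θ (θ⁻¹ s) := by simp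
    simp only [hx, hKinv]
    rw [show K s - 1 + 1 = K s by omega, Finset.sum_range_succ, hK s]
    ring

lemma conj_iff_pointwise {S : Type*} [Fintype S] [DecidableEq S] (θ : Equiv.Perm S)
    (c c' x : S → ℤ) :
    ((⟨Multiplicative.ofAdd x, 1⟩ : Multiplicative (S → ℤ) ⋊[permAct] Equiv.Perm S) *
            ⟨Multiplicative.ofAdd c, θ⟩ * (⟨Multiplicative.ofAdd x, 1⟩ :
              Multiplicative (S → ℤ) ⋊[permAct] Equiv.Perm S)⁻¹ =
          ⟨Multiplicative.ofAdd c', θ⟩) ↔ ∀ s, x s + c s - x (θ⁻¹ s) = c' s := by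
  rw [SemidirectProduct.ext_iff]
  simp only [SemidirectProduct.mul_left, SemidirectProduct.mul_right,
    SemidirectProduct.inv_left, SemidirectProduct.inv_right, map_one, inv_one, one_mul, mul_one]
  constructor
  · intro ⟨h, _⟩ s
    have := congrFun (congrArg Multiplicative.toAdd h) s
    simpa [permAct, sub_eq_add_neg] using this
  · intro h
    refine ⟨?_, trivial⟩
    apply Multiplicative.toAdd.injective
    funext s
    have := h s
    simp [permAct]
    linarith [h s, show x (θ⁻¹ s) = x (θ.symm s) from rfl]

/-- If `θ` is a full cycle on the finite set `S` (its cyclic group acts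
transitively, i.e. all points are in the same cycle), then `(c, θ)` and `(c', θ)` are
conjugate in `ℤ^S ⋊ Equiv.Perm S` by an element of `ℤ^S × {1}` iff `∑ c = ∑ c'`. -/
theorem stmt18 {S : Type*} [Fintype S] [DecidableEq S] (θ : Equiv.Perm S)
    (hθ : ∀ s t : S, θ.SameCycle s t) (c c' : S → ℤ) :
    (∃ x : S → ℤ,
        (⟨Multiplicative.ofAdd x, 1⟩ : Multiplicative (S → ℤ) ⋊[permAct] Equiv.Perm S) *
            ⟨Multiplicative.ofAdd c, θ⟩ * (⟨Multiplicative.ofAdd x, 1⟩ :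
              Multiplicative (S → ℤ) ⋊[permAct] Equiv.Perm S)⁻¹ =
          ⟨Multiplicative.ofAdd c', θ⟩) ↔
      ∑ s : S, c s = ∑ s : S, c' s := by
  simp only [conj_iff_pointwise]
  constructor
  · rintro ⟨x, hx⟩
    have h1 : ∑ s : S, (x s + c s - x (θ⁻¹ s)) = ∑ s : S, c' s :=
      Finset.sum_congr rfl fun s _ => hx s
    have h2 : ∑ s : S, x (θ⁻¹ s) = ∑ s : S, x s := Equiv.sum_comp θ⁻¹ x
    rw [Finset.sum_sub_distrib, Finset.sum_add_distrib, h2] at h1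
    linarith
  · intro h
    obtain ⟨x, hx⟩ := exists_potential θ hθ (fun s => c' s - c s)
      (by rw [Finset.sum_sub_distrib, h, sub_self])
    exact ⟨x, fun s => by linarith [hx s]⟩
end

section
/- Let S be a finite set, G = ℤ^S ⋊ Equiv.Perm S, and let (c, θ) ∈ G with θ ≠ 1. If there exists an orbit O of θ with ∑_{s ∈ O} c(s) ≠ 0, then (c, θ) has infinite order. -/
open Finset

lemma pow_left_eq {S : Type*} (θ : Equiv.Perm S) (c : S → ℤ) (n : ℕ) :
    ((⟨Multiplicative.ofAdd c, θ⟩ :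
        Multiplicative (S → ℤ) ⋊[permAct] Equiv.Perm S) ^ n).left =
      Multiplicative.ofAdd (fun s => ∑ k ∈ range n, c ((θ ^ k)⁻¹ s)) := by
  induction n with
  | zero => simp; rfl
  | succ n ih =>
    rw [pow_succ']
    have : (((⟨Multiplicative.ofAdd c, θ⟩ :
        Multiplicative (S → ℤ) ⋊[permAct] Equiv.Perm S)) *
        ((⟨Multiplicative.ofAdd c, θ⟩ :
        Multiplicative (S → ℤ) ⋊[permAct] Equiv.Perm S) ^ n)).left
        = Multiplicative.ofAdd c * permAct θ (((⟨Multiplicative.ofAdd c, θ⟩ :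
        Multiplicative (S → ℤ) ⋊[permAct] Equiv.Perm S) ^ n).left) := rfl
    rw [this, ih]
    refine Multiplicative.toAdd.injective (funext fun s => ?_)
    show c s + ∑ k ∈ range n, c ((θ ^ k)⁻¹ (θ⁻¹ s)) = ∑ k ∈ range (n+1), c ((θ ^ k)⁻¹ s)
    rw [Finset.sum_range_succ', add_comm]
    congr 1

/-- In `G = ℤ^S ⋊ Equiv.Perm S`, if `θ ≠ 1` and there is an orbit of
`θ` over which the sum of `c` is nonzero, then `(c, θ)` has infinite order. -/
theorem stmt19 {S : Type*} [Fintype S] [DecidableEq S] (θ : Equiv.Perm S) (c : S → ℤ)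
    (hθ : θ ≠ 1)
    (h : ∃ s : S, ∑ t ∈ Finset.univ.filter (fun t => θ.SameCycle s t), c t ≠ 0) :
    ¬ IsOfFinOrder
        (⟨Multiplicative.ofAdd c, θ⟩ : Multiplicative (S → ℤ) ⋊[permAct] Equiv.Perm S) := by
  obtain ⟨s, hs⟩ := h
  intro hfin
  obtain ⟨n, hn, hpow⟩ := hfin.exists_pow_eq_one
  have hleft := congrArg SemidirectProduct.left hpow
  rw [pow_left_eq] at hleft
  have hfun : (fun t => ∑ k ∈ range n, c ((θ ^ k)⁻¹ t)) = 0 := by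
    have := congrArg Multiplicative.toAdd hleft
    simpa using this
  set O := Finset.univ.filter (fun t => θ.SameCycle s t) with hO
  have hsum : ∑ t ∈ O, ∑ k ∈ range n, c ((θ ^ k)⁻¹ t) = 0 := by
    rw [show (fun t => ∑ k ∈ range n, c ((θ ^ k)⁻¹ t)) = 0 from hfun]
    simp
  rw [Finset.sum_comm] at hsum
  have hinner : ∀ k ∈ range n, ∑ t ∈ O, c ((θ ^ k)⁻¹ t) = ∑ t ∈ O, c t := by
    intro k _
    apply Finset.sum_nbij' (i := fun t => (θ ^ k)⁻¹ t) (j := fun t => (θ ^ k) t)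
    · intro t ht
      simp only [hO, Finset.mem_filter, Finset.mem_univ, true_and] at ht ⊢
      exact ht.trans ⟨-(k:ℤ), by simp [zpow_neg, zpow_natCast]⟩
    · intro t ht
      simp only [hO, Finset.mem_filter, Finset.mem_univ, true_and] at ht ⊢
      exact ht.trans ⟨(k:ℤ), by simp [zpow_natCast]⟩
    · intro t _; simp
    · intro t _; simp
    · intro t _; rfl
  rw [Finset.sum_congr rfl hinner, Finset.sum_const, Finset.card_range] at hsum
  have : (n : ℤ) ≠ 0 := Int.natCast_ne_zero.mpr hn.ne'
  exact hs (by simpa [this, hn.ne'] using hsum)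
end
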